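/- arXiv:1111.3212 — 12 statements merged into one kernel-verified Lean document; each statement's English description precedes it below -/
import Mathlib

section
/- Let X be an infinite set. The set of T1 topologies on X is closed in Top(X): the set {F ∈ Top(X) : the topology on X whose open sets form the family F is T1} is a closed subset of the subspace Top(X) of 2^{P(X)}. -/
/-- `Top(X)` as a subset of `2^{P(X)} = (Set X → Bool)`: the families of subsets
of `X` that are exactly the open sets of some topology on `X`. -/
def TopSet (X : Type*) : Set (Set X → Bool) :=
  {F | ∃ t : TopologicalSpace X, ∀ A : Set X, F A = true ↔ t.IsOpen A}

/-! A topology is T1 exactly when every co-singleton `X \ {x}` is open, so the T1 points of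
`Top(X)` are those lying in the subbasic clopen sets `{F | X \ {x} ∈ F}` for every `x`. -/

theorem t1Space_iff_forall_isOpen_compl_singleton {X : Type*} [TopologicalSpace X] :
    T1Space X ↔ ∀ x : X, IsOpen ({x}ᶜ : Set X) :=
  ⟨fun _ _ => isOpen_compl_singleton, fun h => ⟨fun x => isOpen_compl_iff.mp (h x)⟩⟩

theorem setOf_t1_eq_iInter_compl_singleton_mem (X : Type*) :
    {ρ : ↥(TopSet X) | ∃ t : TopologicalSpace X,
      (∀ A : Set X, ρ.val A = true ↔ t.IsOpen A) ∧ @T1Space X t}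
      = ⋂ x : X, {ρ : ↥(TopSet X) | ρ.val {x}ᶜ = true} := by
  ext ρ
  obtain ⟨t₀, hρ₀⟩ := ρ.2
  simp only [Set.mem_iInter, Set.mem_ofPred_eq]
  constructor
  · rintro ⟨t, hρ, hT1⟩ x
    exact (hρ _).mpr ((@t1Space_iff_forall_isOpen_compl_singleton X t).mp hT1 x)
  · intro h
    exact ⟨t₀, hρ₀,
      (@t1Space_iff_forall_isOpen_compl_singleton X t₀).mpr fun x => (hρ₀ _).mp (h x)⟩

theorem isClosed_setOf_apply_eq {ι β : Type*} [TopologicalSpace β] [T1Space β] (i : ι) (b : β) :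
    IsClosed {F : ι → β | F i = b} :=
  isClosed_singleton.preimage (continuous_apply i)

theorem t1_topologies_isClosed_in_TopSet_general (X : Type*) :
    IsClosed {ρ : ↥(TopSet X) | ∃ t : TopologicalSpace X,
      (∀ A : Set X, ρ.val A = true ↔ t.IsOpen A) ∧ @T1Space X t} := by
  rw [setOf_t1_eq_iInter_compl_singleton_mem]
  exact isClosed_iInter fun x =>
    (isClosed_setOf_apply_eq ({x}ᶜ : Set X) true).preimage continuous_subtype_val

/-- for an infinite set `X`, the set of T1 topologies on `X` is
closed in the subspace `Top(X)` of `2^{P(X)}`. -/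
theorem t1_topologies_isClosed_in_TopSet (X : Type*) [Infinite X] :
    IsClosed {ρ : ↥(TopSet X) | ∃ t : TopologicalSpace X,
      (∀ A : Set X, ρ.val A = true ↔ t.IsOpen A) ∧ @T1Space X t} :=
  t1_topologies_isClosed_in_TopSet_general X
end

section
/- Let X be an infinite set, f : X → X a function and σ a topology on X. Then σ_f = {ρ ∈ Top(X) : f is continuous as a map from (X, σ) to (X, ρ)} is closed in Top(X) (closed in the subspace topology on Top(X)). -/
/-!
Continuity of `f : (X, σ) → (X, ρ)` says that every `A` with `ρ A = true` has `σ`-open preimage.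
Each of these conditions constrains a single coordinate of `2^{P(X)}`, a discrete factor, so it
cuts out a closed set; `σ_f` is the trace on `Top(X)` of their intersection.
-/

open Topology

theorem isClosed_setOf_forall_apply_eq_true_imp {ι : Type*} (P : ι → Prop) :
    IsClosed {F : ι → Bool | ∀ i, F i = true → P i} := by
  simp only [Set.ofPred_forall]
  exact isClosed_iInter fun i =>
    (isClosed_discrete {b : Bool | b = true → P i}).preimage (continuous_apply (A := fun _ => Bool) i)

theorem TopSet.exists_continuous_iff {X : Type*} {F : Set X → Bool} (hF : F ∈ TopSet X)
    (σ : TopologicalSpace X) (f : X → X) :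
    (∃ t : TopologicalSpace X, (∀ A, F A = true ↔ IsOpen[t] A) ∧ Continuous[σ, t] f) ↔
      ∀ A, F A = true → IsOpen[σ] (f ⁻¹' A) := by
  constructor
  · rintro ⟨t, hFt, hf⟩ A hA
    exact (@continuous_def X X σ t f).mp hf A ((hFt A).mp hA)
  · intro h
    obtain ⟨t, hFt⟩ := hF
    exact ⟨t, hFt, (@continuous_def X X σ t f).mpr fun A hA => h A ((hFt A).mpr hA)⟩

theorem sigma_sub_f_isClosed_in_TopSet_general (X : Type*) (f : X → X)
    (σ : TopologicalSpace X) :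
    IsClosed {ρ : ↥(TopSet X) | ∃ t : TopologicalSpace X,
      (∀ A : Set X, ρ.val A = true ↔ t.IsOpen A) ∧ @Continuous X X σ t f} := by
  have hσf : {ρ : ↥(TopSet X) | ∃ t : TopologicalSpace X,
      (∀ A : Set X, ρ.val A = true ↔ t.IsOpen A) ∧ @Continuous X X σ t f} =
      Subtype.val ⁻¹' {F | ∀ A, F A = true → IsOpen[σ] (f ⁻¹' A)} :=
    Set.ext fun ρ => TopSet.exists_continuous_iff ρ.2 σ f
  rw [hσf]
  exact (isClosed_setOf_forall_apply_eq_true_imp _).preimage continuous_subtype_val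

/-- for an infinite set `X`, `f : X → X` and a topology `σ` on `X`,
the set `σ_f = {ρ ∈ Top(X) : f : (X,σ) → (X,ρ) is continuous}` is closed in the
subspace `Top(X)` of `2^{P(X)}`. -/
theorem sigma_sub_f_isClosed_in_TopSet (X : Type*) [Infinite X] (f : X → X)
    (σ : TopologicalSpace X) :
    IsClosed {ρ : ↥(TopSet X) | ∃ t : TopologicalSpace X,
      (∀ A : Set X, ρ.val A = true ↔ t.IsOpen A) ∧ @Continuous X X σ t f} :=
  sigma_sub_f_isClosed_in_TopSet_general X f σ
end

section
/- Let X be an infinite set, f : X → X a function and σ a topology on X. Then σ^f = {ρ ∈ Top(X) : f is continuous as a map from (X, ρ) to (X, σ)} is closed in Top(X) (closed in the subspace topology on Top(X)). -/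
lemma isClosed_setOf_forall_imp_apply_eq_true {ι κ : Type*} (p : κ → Prop) (g : κ → ι) :
    IsClosed {F : ι → Bool | ∀ k, p k → F (g k) = true} := by
  simp only [Set.ofPred_forall]
  exact isClosed_iInter fun k => isClosed_iInter fun _ =>
    isClosed_eq (continuous_apply (g k)) continuous_const

lemma TopSet.exists_isOpen_iff_and_continuous_iff {X Y : Type*} (σ : TopologicalSpace Y)
    (f : X → Y) {F : Set X → Bool} (hF : F ∈ TopSet X) :
    (∃ t : TopologicalSpace X, (∀ A, F A = true ↔ t.IsOpen A) ∧ @Continuous X Y t σ f) ↔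
      ∀ A, σ.IsOpen A → F (f ⁻¹' A) = true := by
  constructor
  · rintro ⟨t, ht, hf⟩ A hA
    exact (ht _).2 (continuous_def.1 hf A hA)
  · intro hpre
    obtain ⟨t, ht⟩ := hF
    exact ⟨t, ht, continuous_def.2 fun A hA => (ht _).1 (hpre A hA)⟩

theorem sigma_sup_f_isClosed_in_TopSet_general (X : Type*) (f : X → X)
    (σ : TopologicalSpace X) :
    IsClosed {ρ : ↥(TopSet X) | ∃ t : TopologicalSpace X,
      (∀ A : Set X, ρ.val A = true ↔ t.IsOpen A) ∧ @Continuous X X t σ f} := by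
  convert (isClosed_setOf_forall_imp_apply_eq_true σ.IsOpen (f ⁻¹' ·)).preimage
    (continuous_subtype_val (p := (· ∈ TopSet X))) using 1
  ext ρ
  exact TopSet.exists_isOpen_iff_and_continuous_iff σ f ρ.2

/-- for an infinite set `X`, `f : X → X` and a topology `σ` on `X`,
the set `σ^f = {ρ ∈ Top(X) : f : (X,ρ) → (X,σ) is continuous}` is closed in the
subspace `Top(X)` of `2^{P(X)}`. -/
theorem sigma_sup_f_isClosed_in_TopSet (X : Type*) [Infinite X] (f : X → X)
    (σ : TopologicalSpace X) :
    IsClosed {ρ : ↥(TopSet X) | ∃ t : TopologicalSpace X,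
      (∀ A : Set X, ρ.val A = true ↔ t.IsOpen A) ∧ @Continuous X X t σ f} :=
  sigma_sup_f_isClosed_in_TopSet_general X f σ
end

section
/- Let X be an infinite set and f : X → X a function. Then Cns(f) = {ρ ∈ Top(X) : f is continuous as a map from (X, ρ) to (X, ρ)} is closed in Top(X) (closed in the subspace topology on Top(X)). -/
/-! Continuity of `f` for the topology `ρ` says `ρ A → ρ (f ⁻¹' A)` for every `A`; each such
implication involves only two coordinates of `2^{P(X)}`, so it cuts out a clopen set, and `Cns(f)`
is the trace on `Top(X)` of their intersection. -/

theorem isClosed_setOf_forall_apply_imp_apply {α : Type*} (g : α → α) :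
    IsClosed {F : α → Bool | ∀ a, F a = true → F (g a) = true} := by
  simp only [Set.ofPred_forall]
  refine isClosed_iInter fun a => ?_
  have hcoord : Continuous fun F : α → Bool => (F a, F (g a)) :=
    (continuous_apply a).prodMk (continuous_apply (g a))
  exact (isClosed_discrete {p : Bool × Bool | p.1 = true → p.2 = true}).preimage hcoord

theorem continuous_iff_forall_apply_imp_apply_preimage {X : Type*} {t : TopologicalSpace X}
    {F : Set X → Bool} (ht : ∀ A, F A = true ↔ t.IsOpen A) (f : X → X) :
    @Continuous X X t t f ↔ ∀ A, F A = true → F (f ⁻¹' A) = true := by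
  simp only [ht]
  exact continuous_def

theorem Cns_isClosed_in_TopSet_general (X : Type*) (f : X → X) :
    IsClosed {ρ : ↥(TopSet X) | ∃ t : TopologicalSpace X,
      (∀ A : Set X, ρ.val A = true ↔ t.IsOpen A) ∧ @Continuous X X t t f} := by
  have hCns : {ρ : ↥(TopSet X) | ∃ t : TopologicalSpace X,
      (∀ A : Set X, ρ.val A = true ↔ t.IsOpen A) ∧ @Continuous X X t t f} =
      Subtype.val ⁻¹' {F | ∀ A, F A = true → F (f ⁻¹' A) = true} := by
    ext ⟨F, t₀, ht₀⟩
    constructor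
    · rintro ⟨t, ht, hf⟩
      exact (continuous_iff_forall_apply_imp_apply_preimage ht f).mp hf
    · exact fun hF => ⟨t₀, ht₀, (continuous_iff_forall_apply_imp_apply_preimage ht₀ f).mpr hF⟩
  rw [hCns]
  exact (isClosed_setOf_forall_apply_imp_apply (f ⁻¹' ·)).preimage continuous_subtype_val

/-- for an infinite set `X` and `f : X → X`, the set
`Cns(f) = {ρ ∈ Top(X) : f : (X,ρ) → (X,ρ) is continuous}` is closed in the
subspace `Top(X)` of `2^{P(X)}`. -/
theorem Cns_isClosed_in_TopSet (X : Type*) [Infinite X] (f : X → X) :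
    IsClosed {ρ : ↥(TopSet X) | ∃ t : TopologicalSpace X,
      (∀ A : Set X, ρ.val A = true ↔ t.IsOpen A) ∧ @Continuous X X t t f} :=
  Cns_isClosed_in_TopSet_general X f
end

section
/- Let X be an infinite set and f : X → X a function. Then Open(f) = {ρ ∈ Top(X) : f is an open map from (X, ρ) to (X, ρ)} is closed in Top(X) (closed in the subspace topology on Top(X)). -/
/-! Openness of `f` for the topology `ρ` says `ρ A → ρ (f '' A)` for every `A`: an intersection of
conditions each on two coordinates of the product `2^{P(X)}`, hence closed. -/

theorem isClosed_setOf_apply_imp_apply {ι : Type*} (i j : ι) :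
    IsClosed {F : ι → Bool | F i = true → F j = true} :=
  isClosed_imp ((isOpen_discrete {true}).preimage (continuous_apply (A := fun _ => Bool) i))
    ((isClosed_discrete {true}).preimage (continuous_apply (A := fun _ => Bool) j))

theorem isOpenMap_iff_of_isOpen_iff {X : Type*} (t : TopologicalSpace X) {F : Set X → Bool}
    (hF : ∀ A : Set X, F A = true ↔ t.IsOpen A) (f : X → X) :
    @IsOpenMap X X t t f ↔ ∀ A : Set X, F A = true → F (f '' A) = true := by
  simp only [hF]
  rfl

theorem Open_isClosed_in_TopSet_general (X : Type*) (f : X → X) :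
    IsClosed {ρ : ↥(TopSet X) | ∃ t : TopologicalSpace X,
      (∀ A : Set X, ρ.val A = true ↔ t.IsOpen A) ∧ @IsOpenMap X X t t f} := by
  have hOpen : {ρ : ↥(TopSet X) | ∃ t : TopologicalSpace X,
      (∀ A : Set X, ρ.val A = true ↔ t.IsOpen A) ∧ @IsOpenMap X X t t f} =
      Subtype.val ⁻¹' ⋂ A : Set X, {F : Set X → Bool | F A = true → F (f '' A) = true} := by
    ext ρ
    simp only [Set.mem_ofPred_eq, Set.mem_preimage, Set.mem_iInter]
    constructor
    · rintro ⟨t, ht, hf⟩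
      exact (isOpenMap_iff_of_isOpen_iff t ht f).mp hf
    · intro hρ
      obtain ⟨t, ht⟩ := ρ.property
      exact ⟨t, ht, (isOpenMap_iff_of_isOpen_iff t ht f).mpr hρ⟩
  rw [hOpen]
  exact (isClosed_iInter fun A => isClosed_setOf_apply_imp_apply A (f '' A)).preimage
    continuous_subtype_val

/-- for an infinite set `X` and `f : X → X`, the set
`Open(f) = {ρ ∈ Top(X) : f : (X,ρ) → (X,ρ) is an open map}` is closed in the
subspace `Top(X)` of `2^{P(X)}`. -/
theorem Open_isClosed_in_TopSet (X : Type*) [Infinite X] (f : X → X) :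
    IsClosed {ρ : ↥(TopSet X) | ∃ t : TopologicalSpace X,
      (∀ A : Set X, ρ.val A = true ↔ t.IsOpen A) ∧ @IsOpenMap X X t t f} :=
  Open_isClosed_in_TopSet_general X f
end

section
/- Let Y be an infinite set and A, B ⊆ Y with B nonempty. Then the set [F_B^A]^{<ω} of graphs of finite partial functions from A to B is a proper dense subset of F_B^A (with the subspace topology induced from 2^{Y×Y}) if and only if A is infinite. -/
/-!
The first projection is injective on a functional graph, so a partial function with infinite
graph has infinite domain inside `A`; conversely, for infinite `A` and `b ∈ B` the constant
function `A → {b}` has an infinite graph. Density holds for all `A` and `B`: restricting `p` to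
larger and larger finite sets of points converges to `p` in the product topology, and a
restriction of a partial function is again one.
-/

open Filter Topology

/-- `F_B^A`: graphs of partial functions from `A` to `B`, inside `2^{Y×Y}`. -/
def PFunSet {Y : Type*} (A B : Set Y) : Set (Y × Y → Bool) :=
  {p | (∀ q : Y × Y, p q = true → q.1 ∈ A ∧ q.2 ∈ B) ∧
       ∀ a b b' : Y, p (a, b) = true → p (a, b') = true → b = b'}

/-- `[F_B^A]^{<ω}`: graphs of finite partial functions from `A` to `B`. -/
def FinPFunSet {Y : Type*} (A B : Set Y) : Set (Y × Y → Bool) :=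
  {p | p ∈ PFunSet A B ∧ {q : Y × Y | p q = true}.Finite}

theorem tendsto_finset_restrict {α : Type*} [DecidableEq α] (p : α → Bool) :
    Tendsto (fun (s : Finset α) (a : α) => decide (a ∈ s) && p a) atTop (𝓝 p) := by
  rw [tendsto_pi_nhds]
  intro a
  refine tendsto_const_nhds.congr' ?_
  filter_upwards [eventually_ge_atTop {a}] with s hs
  simp [Finset.singleton_subset_iff.mp hs]

namespace PFunSet

variable {Y : Type*} {A B : Set Y} {p : Y × Y → Bool}

theorem mono (hp : p ∈ PFunSet A B) {p' : Y × Y → Bool}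
    (h : ∀ q, p' q = true → p q = true) :
    p' ∈ PFunSet A B :=
  ⟨fun q hq => hp.1 q (h q hq), fun a b b' hb hb' => hp.2 a b b' (h _ hb) (h _ hb')⟩

theorem injOn_fst (hp : p ∈ PFunSet A B) : Set.InjOn Prod.fst {q | p q = true} := by
  rintro ⟨a, b⟩ hb ⟨a', b'⟩ hb' (rfl : a = a')
  rw [hp.2 a b b' hb hb']

theorem infinite_of_infinite_support (hp : p ∈ PFunSet A B)
    (h : {q | p q = true}.Infinite) : A.Infinite :=
  (h.image (injOn_fst hp)).mono (Set.image_subset_iff.2 fun q hq => (hp.1 q hq).1)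

end PFunSet

section

variable {Y : Type*}

open Classical in
noncomputable def constGraph (A : Set Y) (b : Y) : Y × Y → Bool :=
  fun q => decide (q ∈ A ×ˢ {b})

theorem constGraph_eq_true_iff {A : Set Y} {b : Y} {q : Y × Y} :
    constGraph A b q = true ↔ q.1 ∈ A ∧ q.2 = b := by
  simp [constGraph]

theorem constGraph_mem_pFunSet {A B : Set Y} {b : Y} (hb : b ∈ B) :
    constGraph A b ∈ PFunSet A B := by
  refine ⟨fun q h => ?_, fun a b₁ b₂ h₁ h₂ => ?_⟩
  · obtain ⟨ha, rfl⟩ := constGraph_eq_true_iff.1 h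
    exact ⟨ha, hb⟩
  · exact (constGraph_eq_true_iff.1 h₁).2.trans (constGraph_eq_true_iff.1 h₂).2.symm

theorem finPFunSet_ssubset_pFunSet_iff {A B : Set Y} (hB : B.Nonempty) :
    FinPFunSet A B ⊂ PFunSet A B ↔ A.Infinite := by
  refine ⟨fun h => ?_, fun hA => ⟨fun p hp => hp.1, fun hsub => ?_⟩⟩
  · obtain ⟨p, hp, hpf⟩ := Set.exists_of_ssubset h
    exact PFunSet.infinite_of_infinite_support hp fun hfin => hpf ⟨hp, hfin⟩
  · obtain ⟨b, hb⟩ := hB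
    have hsupp : {q | constGraph A b q = true} = A ×ˢ {b} :=
      Set.ext fun _ => constGraph_eq_true_iff
    exact (hsupp ▸ hA.prod_left (Set.singleton_nonempty b))
      (hsub (constGraph_mem_pFunSet hb)).2

theorem pFunSet_subset_closure_finPFunSet (A B : Set Y) :
    PFunSet A B ⊆ closure (FinPFunSet A B) := by
  classical
  refine fun p hp => mem_closure_of_tendsto (tendsto_finset_restrict p) ?_
  refine Eventually.of_forall fun s =>
    ⟨PFunSet.mono hp fun q hq => (Bool.and_eq_true_iff.1 hq).2,
      s.finite_toSet.subset fun q hq => by simpa using (Bool.and_eq_true_iff.1 hq).1⟩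

end

theorem finPFunSet_proper_dense_iff_general (Y : Type*) (A B : Set Y)
    (hB : B.Nonempty) :
    (FinPFunSet A B ⊂ PFunSet A B ∧ PFunSet A B ⊆ closure (FinPFunSet A B)) ↔
      A.Infinite := by
  rw [finPFunSet_ssubset_pFunSet_iff hB]
  exact and_iff_left (pFunSet_subset_closure_finPFunSet A B)

/-- for an infinite set `Y` and `A, B ⊆ Y` with `B` nonempty,
`[F_B^A]^{<ω}` is a proper dense subset of `F_B^A` if and only if `A` is
infinite. -/
theorem finPFunSet_proper_dense_iff (Y : Type*) [Infinite Y] (A B : Set Y)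
    (hB : B.Nonempty) :
    (FinPFunSet A B ⊂ PFunSet A B ∧ PFunSet A B ⊆ closure (FinPFunSet A B)) ↔
      A.Infinite :=
  finPFunSet_proper_dense_iff_general Y A B hB
end

section
/- Let Y be an infinite set and A, B ⊆ Y with B nonempty. Then the space [F_B^A]^{<ω} of graphs of finite partial functions from A to B, with the subspace topology induced from 2^{Y×Y}, fails to be locally compact if and only if A is infinite. -/
/-!
If `A` is finite, every partial function from `A` is finite, so `[F_B^A]^{<ω}` is the closed
set `F_B^A` of the compact space `2^{Y×Y}`. If `A` is infinite, the empty function has no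
compact neighbourhood: a locally compact subspace of a Hausdorff space is open in its closure,
and the closure of `[F_B^A]^{<ω}` is `F_B^A`. But every basic neighbourhood of the empty function
only constrains finitely many pairs, so it contains the graph of a constant function `b ∈ B` on an
infinite subset of `A`, which lies in `F_B^A` and is not finite.
-/

open Set Topology

theorem isLocallyClosed_of_weaklyLocallyCompactSpace {X : Type*} [TopologicalSpace X]
    [T2Space X] {s : Set X} [WeaklyLocallyCompactSpace s] : IsLocallyClosed s := by
  refine ((isLocallyClosed_tfae s).out 0 3).mpr fun x hx => ?_
  obtain ⟨K, hK, hKx⟩ := exists_compact_mem_nhds (⟨x, hx⟩ : s)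
  obtain ⟨u, hu, huK⟩ := (mem_nhds_subtype s _ K).mp hKx
  obtain ⟨U, hUu, hU, hxU⟩ := mem_nhds_iff.mp hu
  have hUs : U ∩ s ⊆ Subtype.val '' K := fun y ⟨hyU, hys⟩ => ⟨⟨y, hys⟩, huK (hUu hyU), rfl⟩
  refine ⟨U, hxU, hU, ?_⟩
  calc U ∩ closure s ⊆ closure (U ∩ s) := hU.inter_closure
    _ ⊆ Subtype.val '' K := (hK.image continuous_subtype_val).isClosed.closure_subset_iff.mpr hUs
    _ ⊆ s := Subtype.coe_image_subset s K

theorem exists_finite_forall_eq_imp_mem_of_mem_nhds_pi {ι : Type*} {α : ι → Type*}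
    [∀ i, TopologicalSpace (α i)] [∀ i, DiscreteTopology (α i)] {f : ∀ i, α i}
    {U : Set (∀ i, α i)} (hU : U ∈ 𝓝 f) :
    ∃ I : Set ι, I.Finite ∧ ∀ g : ∀ i, α i, (∀ i ∈ I, g i = f i) → g ∈ U := by
  rw [nhds_pi, Filter.mem_pi] at hU
  obtain ⟨I, hI, t, ht, htU⟩ := hU
  exact ⟨I, hI, fun g hg => htU fun i hi => hg i hi ▸ mem_of_mem_nhds (ht i)⟩

section PFunSet

variable {Y : Type*} {A B : Set Y}

theorem isClosed_pFunSet : IsClosed (PFunSet A B) := by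
  simp only [PFunSet, ofPred_and, ofPred_forall]
  refine .inter (isClosed_iInter fun q => ?_)
    (isClosed_iInter fun a => isClosed_iInter fun b => isClosed_iInter fun b' => ?_)
  · exact (isClosed_discrete {x : Bool | x = true → q.1 ∈ A ∧ q.2 ∈ B}).preimage
      (continuous_apply (A := fun _ => Bool) q)
  · exact (isClosed_discrete {x : Bool × Bool | x.1 = true → x.2 = true → b = b'}).preimage
      ((continuous_apply (A := fun _ => Bool) (a, b)).prodMk (continuous_apply (a, b')))

theorem mem_pFunSet_of_imp {p p' : Y × Y → Bool} (hp : p ∈ PFunSet A B)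
    (h : ∀ x, p' x = true → p x = true) : p' ∈ PFunSet A B :=
  ⟨fun x hx => hp.1 x (h x hx), fun a b b' hb hb' => hp.2 a b b' (h _ hb) (h _ hb')⟩

theorem boolIndicator_prod_singleton_mem_pFunSet {S : Set Y} {b : Y} (hS : S ⊆ A) (hb : b ∈ B) :
    (S ×ˢ {b}).boolIndicator ∈ PFunSet A B := by
  simp only [PFunSet, ← mem_iff_boolIndicator, mem_prod, mem_singleton_iff, mem_ofPred_eq]
  exact ⟨fun x hx => ⟨hS hx.1, hx.2 ▸ hb⟩, fun a b₁ b₂ h₁ h₂ => h₁.2.trans h₂.2.symm⟩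

theorem finPFunSet_eq_pFunSet (hA : A.Finite) : FinPFunSet A B = PFunSet A B := by
  refine Subset.antisymm (fun p hp => hp.1) fun p hp => ⟨hp, ?_⟩
  have hinj : InjOn Prod.fst {q : Y × Y | p q = true} := fun q₁ h₁ q₂ h₂ hfst =>
    Prod.ext hfst (hp.2 q₁.1 q₁.2 q₂.2 h₁ (hfst ▸ h₂))
  exact (hA.subset (image_subset_iff.mpr fun q hq => (hp.1 q hq).1)).of_finite_image hinj

theorem closure_finPFunSet : closure (FinPFunSet A B) = PFunSet A B := by
  refine Subset.antisymm (isClosed_pFunSet.closure_subset_iff.mpr fun p hp => hp.1) fun p hp => ?_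
  refine mem_closure_iff_nhds.mpr fun t ht => ?_
  obtain ⟨I, hI, hIt⟩ := exists_finite_forall_eq_imp_mem_of_mem_nhds_pi ht
  set p' := ({x | p x = true} ∩ I).boolIndicator
  have hp' : ∀ x, p' x = true ↔ p x = true ∧ x ∈ I := fun x => (mem_iff_boolIndicator _ x).symm
  exact ⟨p', hIt p' fun x hx => Bool.eq_iff_iff.mpr ((hp' x).trans (and_iff_left hx)),
    mem_pFunSet_of_imp hp fun x hx => ((hp' x).mp hx).1, hI.subset fun x hx => ((hp' x).mp hx).2⟩

theorem compactSpace_finPFunSet (hA : A.Finite) : CompactSpace (FinPFunSet A B) := by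
  rw [finPFunSet_eq_pFunSet hA]
  exact isCompact_iff_compactSpace.mp isClosed_pFunSet.isCompact

theorem not_weaklyLocallyCompactSpace_finPFunSet (hA : A.Infinite) (hB : B.Nonempty) :
    ¬ WeaklyLocallyCompactSpace (FinPFunSet A B) := by
  intro _
  obtain ⟨b, hb⟩ := hB
  have hempty : (fun _ => false) ∈ FinPFunSet A B := ⟨⟨by simp, by simp⟩, by simp⟩
  have hlc := (isLocallyClosed_tfae (FinPFunSet A B)).out 0 3
  obtain ⟨U, hemptyU, hU, hUF⟩ := hlc.mp isLocallyClosed_of_weaklyLocallyCompactSpace _ hempty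
  obtain ⟨I, hI, hIU⟩ := exists_finite_forall_eq_imp_mem_of_mem_nhds_pi (hU.mem_nhds hemptyU)
  set S := A \ Prod.fst '' I
  have hqU : (S ×ˢ {b}).boolIndicator ∈ U := hIU _ fun x hx =>
    (notMem_iff_boolIndicator _ x).mp fun hxS => hxS.1.2 ⟨x, hx, rfl⟩
  have hqF : (S ×ˢ {b}).boolIndicator ∈ FinPFunSet A B := hUF ⟨hqU, closure_finPFunSet ▸
    boolIndicator_prod_singleton_mem_pFunSet sdiff_subset hb⟩
  exact (hA.sdiff (hI.image Prod.fst)).prod_left (singleton_nonempty b) <|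
    (preimage_boolIndicator_true (S ×ˢ {b})) ▸ hqF.2

end PFunSet

theorem finPFunSet_not_locallyCompact_iff_general (Y : Type*) (A B : Set Y)
    (hB : B.Nonempty) :
    ¬ LocallyCompactSpace ↥(FinPFunSet A B) ↔ A.Infinite := by
  constructor
  · intro hnotLC hA
    have := compactSpace_finPFunSet (B := B) hA
    exact hnotLC inferInstance
  · intro hA _
    exact not_weaklyLocallyCompactSpace_finPFunSet hA hB inferInstance

/-- for an infinite set `Y` and `A, B ⊆ Y` with `B` nonempty,
`[F_B^A]^{<ω}` (with the subspace topology) fails to be locally compact if and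
only if `A` is infinite. -/
theorem finPFunSet_not_locallyCompact_iff (Y : Type*) [Infinite Y] (A B : Set Y)
    (hB : B.Nonempty) :
    ¬ LocallyCompactSpace ↥(FinPFunSet A B) ↔ A.Infinite :=
  finPFunSet_not_locallyCompact_iff_general Y A B hB
end

section
/- Let Y be an infinite set and A, B ⊆ Y with B nonempty and the cardinality of B at most that of A. Then the set O_B^A of graphs of partial functions from A onto B is a proper dense subset of F_B^A (with the subspace topology induced from 2^{Y×Y}) if and only if A is infinite. -/
/-- `O_B^A`: graphs of partial functions from `A` onto `B`. -/
def OntoPFunSet {Y : Type*} (A B : Set Y) : Set (Y × Y → Bool) :=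
  {p | p ∈ PFunSet A B ∧ ∀ b ∈ B, ∃ a : Y, p (a, b) = true}

/-! If `A` is finite then so are `B` and `A × B`; then `F_B^A` is a finite, hence discrete,
subspace, and a dense subset of it is all of it. If `A` is infinite, a basic neighbourhood of
`p ∈ F_B^A` only constrains the rows over a finite set `T`; since `|B| ≤ |A \ T|`, an injection
`B ↪ A \ T` supplies fresh rows on which the inverse of that injection makes `p` onto `B`. -/

open Cardinal Set

theorem Set.Infinite.mk_le_mk_sdiff {α : Type*} {A T : Set α} (hA : A.Infinite) (hT : T.Finite) :
    #A ≤ #(A \ T : Set α) :=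
  calc #A ≤ #(A \ T : Set α) + #T := le_mk_sdiff_add_mk A T
    _ = #(A \ T : Set α) := by
      have hinf : ℵ₀ ≤ #(A \ T : Set α) := infinite_iff.mp (hA.sdiff hT).to_subtype
      exact add_eq_left hinf ((lt_aleph0_iff_set_finite.mpr hT).le.trans hinf)

theorem mem_closure_of_forall_finset_exists_eqOn {ι α : Type*} [TopologicalSpace α]
    [DiscreteTopology α] {S : Set (ι → α)} {p : ι → α}
    (h : ∀ I : Finset ι, ∃ q ∈ S, EqOn q p I) : p ∈ closure S := by
  refine mem_closure_iff.mpr fun U hU hpU => ?_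
  obtain ⟨I, u, hu, hIU⟩ := isOpen_pi_iff.mp hU p hpU
  obtain ⟨q, hqS, hqp⟩ := h I
  exact ⟨q, hIU fun i hi => hqp hi ▸ (hu i hi).2, hqS⟩

section PFunSet

variable {Y : Type*} {A B : Set Y}

theorem pFunSet_finite (h : (A ×ˢ B).Finite) : (PFunSet A B).Finite := by
  have : Finite ↥(A ×ˢ B) := h.to_subtype
  refine Finite.of_finite_image (f := fun p (x : ↥(A ×ˢ B)) => p x) (toFinite _) ?_
  intro p hp q hq hpq
  funext x
  by_cases hx : x ∈ A ×ˢ B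
  · exact congrFun hpq ⟨x, hx⟩
  · rw [Bool.eq_false_iff.mpr fun h => hx (hp.1 x h),
      Bool.eq_false_iff.mpr fun h => hx (hq.1 x h)]

theorem ontoPFunSet_subset_pFunSet : OntoPFunSet A B ⊆ PFunSet A B :=
  fun _ hp => hp.1

theorem ontoPFunSet_ssubset_pFunSet (hB : B.Nonempty) : OntoPFunSet A B ⊂ PFunSet A B := by
  refine ssubset_of_subset_not_subset ontoPFunSet_subset_pFunSet fun h => ?_
  have hempty : (fun _ => false) ∈ PFunSet A B :=
    ⟨fun _ h => (Bool.false_ne_true h).elim, fun _ _ _ h => (Bool.false_ne_true h).elim⟩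
  obtain ⟨b, hb⟩ := hB
  obtain ⟨_, h⟩ := (h hempty).2 b hb
  exact Bool.false_ne_true h

open Classical in
/-- Keeping `p` on the rows over `T` and adding the graph of `e⁻¹` on the remaining rows yields
a partial function onto `B`. -/
theorem exists_mem_ontoPFunSet_eqOn_preimage_fst {p : Y × Y → Bool} (hp : p ∈ PFunSet A B)
    (T : Set Y) (e : B ↪ ↥(A \ T)) : ∃ q ∈ OntoPFunSet A B, EqOn q p (Prod.fst ⁻¹' T) := by
  let q : Y × Y → Bool := fun x =>
    if x.1 ∈ T then p x else decide (∃ b : B, x = ((e b : Y), (b : Y)))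
  have hq_of_not_mem : ∀ {x : Y × Y}, x.1 ∉ T → q x = true → ∃ b : B, x = ((e b : Y), (b : Y)) :=
    fun {x} hx h => by simpa [q, hx] using h
  refine ⟨q, ⟨⟨fun x hx => ?_, fun a b b' hb hb' => ?_⟩, fun b hb => ?_⟩, fun _ hx => if_pos hx⟩
  · by_cases hxT : x.1 ∈ T
    · exact hp.1 x (by simpa [q, hxT] using hx)
    · obtain ⟨b, rfl⟩ := hq_of_not_mem hxT hx
      exact ⟨(e b).2.1, b.2⟩
  · by_cases haT : a ∈ T
    · exact hp.2 a b b' (by simpa [q, haT] using hb) (by simpa [q, haT] using hb')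
    · obtain ⟨c, hc⟩ := hq_of_not_mem haT hb
      obtain ⟨c', hc'⟩ := hq_of_not_mem haT hb'
      simp only [Prod.mk.injEq] at hc hc'
      have hcc' : c = c' := e.injective (Subtype.ext (hc.1.symm.trans hc'.1))
      rw [hc.2, hc'.2, hcc']
  · have hbT : (e ⟨b, hb⟩ : Y) ∉ T := (e ⟨b, hb⟩).2.2
    exact ⟨e ⟨b, hb⟩, by simp [q, hbT, hb]⟩

theorem pFunSet_subset_closure_ontoPFunSet (hA : A.Infinite) (hcard : #B ≤ #A) :
    PFunSet A B ⊆ closure (OntoPFunSet A B) := by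
  intro p hp
  refine mem_closure_of_forall_finset_exists_eqOn fun I => ?_
  have hT : (Prod.fst '' (I : Set (Y × Y))).Finite := I.finite_toSet.image _
  obtain ⟨e⟩ := le_def _ _ |>.mp (hcard.trans (hA.mk_le_mk_sdiff hT))
  obtain ⟨q, hqO, hqp⟩ := exists_mem_ontoPFunSet_eqOn_preimage_fst hp _ e
  exact ⟨q, hqO, fun x hx => hqp (mem_image_of_mem _ hx)⟩

end PFunSet

theorem ontoPFunSet_proper_dense_iff_general (Y : Type*) (A B : Set Y)
    (hB : B.Nonempty) (hcard : Cardinal.mk ↥B ≤ Cardinal.mk ↥A) :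
    (OntoPFunSet A B ⊂ PFunSet A B ∧ PFunSet A B ⊆ closure (OntoPFunSet A B)) ↔
      A.Infinite := by
  refine ⟨fun ⟨hproper, hdense⟩ => ?_, fun hA =>
    ⟨ontoPFunSet_ssubset_pFunSet hB, pFunSet_subset_closure_ontoPFunSet hA hcard⟩⟩
  by_contra hA
  have hAfin : A.Finite := not_infinite.mp hA
  have hBfin : B.Finite := lt_aleph0_iff_set_finite.mp
    (hcard.trans_lt (lt_aleph0_iff_set_finite.mpr hAfin))
  have hclosed : IsClosed (OntoPFunSet A B) :=
    ((pFunSet_finite (hAfin.prod hBfin)).subset ontoPFunSet_subset_pFunSet).isClosed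
  exact hproper.not_subset (hdense.trans hclosed.closure_subset)

/-- for an infinite set `Y` and `A, B ⊆ Y` with `B` nonempty and
`|B| ≤ |A|`, the set `O_B^A` of graphs of partial functions from `A` onto `B`
is a proper dense subset of `F_B^A` if and only if `A` is infinite. -/
theorem ontoPFunSet_proper_dense_iff (Y : Type*) [Infinite Y] (A B : Set Y)
    (hB : B.Nonempty) (hcard : Cardinal.mk ↥B ≤ Cardinal.mk ↥A) :
    (OntoPFunSet A B ⊂ PFunSet A B ∧ PFunSet A B ⊆ closure (OntoPFunSet A B)) ↔
      A.Infinite :=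
  ontoPFunSet_proper_dense_iff_general Y A B hB hcard
end

section
/- Let X be an infinite set. Then Lat(X,∨), the set of join complete sublattices of P(X), and Lat(X,∧), the set of meet complete sublattices of P(X), are each dense in Lat(X): the closure of Lat(X,∨) in 2^{P(X)} contains Lat(X), and likewise for Lat(X,∧). -/
/-- `Lat(X)`: sublattices of `P(X)`, as points of `2^{P(X)}`. -/
def LatSet (X : Type*) : Set (Set X → Bool) :=
  {F | ∀ A B : Set X, F A = true → F B = true →
        F (A ∪ B) = true ∧ F (A ∩ B) = true}

/-- `Lat(X,∨)`: join complete sublattices of `P(X)`. -/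
def LatJoinSet (X : Type*) : Set (Set X → Bool) :=
  {F | F ∈ LatSet X ∧ ∀ S : Set (Set X), S.Nonempty →
        (∀ A ∈ S, F A = true) → F (⋃₀ S) = true}

/-- `Lat(X,∧)`: meet complete sublattices of `P(X)`. -/
def LatMeetSet (X : Type*) : Set (Set X → Bool) :=
  {F | F ∈ LatSet X ∧ ∀ S : Set (Set X), S.Nonempty →
        (∀ A ∈ S, F A = true) → F (⋂₀ S) = true}

/-! Fix `F ∈ Lat(X)` and a finite set `I` of coordinates. The sublattice `L` of `P(X)` generated
by the members of `I` on which `F` is true is finite, because a finitely generated distributive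
lattice is finite, and it lies inside `F` (as a family of sets), because `F` is a sublattice.
Being finite, `L` contains the union and the intersection of each of its nonempty subfamilies, so
`L` lies in both `Lat(X,∨)` and `Lat(X,∧)`; and it agrees with `F` on `I`. Basic open sets of the
product topology only constrain finitely many coordinates, so this is density. -/

open Set

lemma mem_closure_of_forall_finset_exists_eqOn_s15 {α β : Type*} [TopologicalSpace β]
    {D : Set (α → β)} {f : α → β} (h : ∀ I : Finset α, ∃ g ∈ D, ∀ a ∈ I, g a = f a) :
    f ∈ closure D := by
  refine mem_closure_iff.2 fun o ho hfo => ?_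
  obtain ⟨I, u, hu, hIu⟩ := isOpen_pi_iff.1 ho f hfo
  obtain ⟨g, hgD, hgf⟩ := h I
  exact ⟨g, hIu fun a ha => hgf a ha ▸ (hu a ha).2, hgD⟩

section

variable {X : Type*} {F : Set X → Bool}

lemma mem_latSet_iff : F ∈ LatSet X ↔ IsSublattice {A | F A = true} :=
  ⟨fun hF => ⟨fun _ hA _ hB => (hF _ _ hA hB).1, fun _ hA _ hB => (hF _ _ hA hB).2⟩,
    fun hF _ _ hA hB => ⟨hF.1 hA hB, hF.2 hA hB⟩⟩

lemma mem_latJoinSet_of_finite (hF : F ∈ LatSet X) (hfin : {A | F A = true}.Finite) :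
    F ∈ LatJoinSet X :=
  ⟨hF, fun _ hS hSF => (mem_latSet_iff.1 hF).1.sSup_mem_of_nonempty (hfin.subset hSF) hS hSF⟩

lemma mem_latMeetSet_of_finite (hF : F ∈ LatSet X) (hfin : {A | F A = true}.Finite) :
    F ∈ LatMeetSet X :=
  ⟨hF, fun _ hS hSF => (mem_latSet_iff.1 hF).2.sInf_mem_of_nonempty (hfin.subset hSF) hS hSF⟩

lemma exists_finite_mem_latSet_eqOn (hF : F ∈ LatSet X) (I : Finset (Set X)) :
    ∃ G ∈ LatSet X, {A | G A = true}.Finite ∧ ∀ A ∈ I, G A = F A := by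
  classical
  set L := latticeClosure {A | A ∈ I ∧ F A = true}
  have hLF : L ⊆ {A | F A = true} :=
    latticeClosure_min (fun A hA => hA.2) (mem_latSet_iff.1 hF)
  have hLfin : L.Finite := (I.finite_toSet.subset fun _ hA => (hA : _ ∧ _).1).latticeClosure
  refine ⟨fun A => decide (A ∈ L), ?_, ?_, fun A hA => ?_⟩
  · simpa only [mem_latSet_iff, decide_eq_true_eq, ofPred_mem_eq] using isSublattice_latticeClosure
  · simpa only [decide_eq_true_eq, ofPred_mem_eq] using hLfin
  · cases hFA : F A
    · exact decide_eq_false fun hAL => by simpa [hFA] using hLF hAL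
    · exact decide_eq_true (subset_latticeClosure ⟨hA, hFA⟩)

end

theorem latJoin_latMeet_dense_in_latSet_general (X : Type*) :
    LatSet X ⊆ closure (LatJoinSet X) ∧ LatSet X ⊆ closure (LatMeetSet X) := by
  constructor
  all_goals
    refine fun F hF => mem_closure_of_forall_finset_exists_eqOn_s15 fun I => ?_
    obtain ⟨G, hG, hfin, hGF⟩ := exists_finite_mem_latSet_eqOn hF I
  · exact ⟨G, mem_latJoinSet_of_finite hG hfin, hGF⟩
  · exact ⟨G, mem_latMeetSet_of_finite hG hfin, hGF⟩

/-- for an infinite set `X`, each of `Lat(X,∨)` and `Lat(X,∧)` is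
dense in `Lat(X)`. -/
theorem latJoin_latMeet_dense_in_latSet (X : Type*) [Infinite X] :
    LatSet X ⊆ closure (LatJoinSet X) ∧ LatSet X ⊆ closure (LatMeetSet X) :=
  latJoin_latMeet_dense_in_latSet_general X
end

section
/- Let X be an infinite set. Then the closure of Top(X) in the product space 2^{P(X)} is exactly LatB(X); in particular Top(X) is a proper subset of LatB(X), Top(X) is not closed in 2^{P(X)}, and Top(X) is not a compact subset of 2^{P(X)}. -/
/-- `LatB(X)`: sublattices of `P(X)` containing `∅` and `X`. -/
def LatBSet (X : Type*) : Set (Set X → Bool) :=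
  {F | F ∅ = true ∧ F Set.univ = true ∧
       ∀ A B : Set X, F A = true → F B = true →
         F (A ∪ B) = true ∧ F (A ∩ B) = true}

open Set TopologicalSpace Topology

theorem mem_closure_pi_of_forall_finset {ι : Type*} {Y : ι → Type*}
    [∀ i, TopologicalSpace (Y i)] {S : Set (∀ i, Y i)} {f : ∀ i, Y i}
    (h : ∀ I : Finset ι, ∃ g ∈ S, ∀ i ∈ I, g i = f i) : f ∈ closure S := by
  rw [mem_closure_iff]
  intro o ho hfo
  obtain ⟨I, u, hu, hIu⟩ := isOpen_pi_iff.mp ho f hfo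
  obtain ⟨g, hgS, hgf⟩ := h I
  exact ⟨g, hIu fun i hi => hgf i hi ▸ (hu i hi).2, hgS⟩

theorem IsSublattice.mem_of_isOpen_generateFrom {X : Type*} {L S : Set (Set X)}
    (hL : IsSublattice L) (hempty : ∅ ∈ L) (huniv : univ ∈ L) (hS : S.Finite) (hSL : S ⊆ L)
    {U : Set X} (hU : IsOpen[generateFrom S] U) : U ∈ L := by
  let _ := generateFrom S
  set B := (fun f => ⋂₀ f) '' {f : Set (Set X) | f.Finite ∧ f ⊆ S}
  have hBL : B ⊆ L := by
    rintro _ ⟨f, ⟨hf, hfS⟩, rfl⟩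
    exact hL.infClosed.sInf_mem hf huniv (hfS.trans hSL)
  have hB : B.Finite := (hS.finite_subsets.subset fun f hf => hf.2).image _
  rw [(isTopologicalBasis_of_subbasis rfl).open_eq_sUnion' hU]
  exact hL.supClosed.sSup_mem (hB.subset fun _ hb => hb.1) hempty fun _ hb => hBL hb.1

section

variable {X : Type*}

theorem isSublattice_of_mem_latBSet {F : Set X → Bool} (hF : F ∈ LatBSet X) :
    IsSublattice {A | F A = true} :=
  ⟨fun _ hA _ hB => (hF.2.2 _ _ hA hB).1, fun _ hA _ hB => (hF.2.2 _ _ hA hB).2⟩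

theorem topSet_subset_latBSet : TopSet X ⊆ LatBSet X := by
  rintro F ⟨t, ht⟩
  let _ := t
  replace ht : ∀ A, F A = true ↔ IsOpen A := ht
  refine ⟨(ht _).2 isOpen_empty, (ht _).2 isOpen_univ, fun A B hA hB => ?_⟩
  rw [ht] at hA hB
  exact ⟨(ht _).2 (hA.union hB), (ht _).2 (hA.inter hB)⟩

theorem isClosed_latBSet : IsClosed (LatBSet X) := by
  have hcoord (A : Set X) : IsClosed {F : Set X → Bool | F A = true} :=
    isClosed_eq (continuous_apply A) continuous_const
  have hlattice (A B : Set X) : IsClosed {F : Set X → Bool |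
      F A = true → F B = true → F (A ∪ B) = true ∧ F (A ∩ B) = true} :=
    (isClosed_discrete {p : Bool × Bool × Bool × Bool |
        p.1 = true → p.2.1 = true → p.2.2.1 = true ∧ p.2.2.2 = true}).preimage
      (f := fun F : Set X → Bool => (F A, F B, F (A ∪ B), F (A ∩ B))) (by fun_prop)
  simp only [LatBSet, ofPred_and, ofPred_forall]
  exact (hcoord ∅).inter ((hcoord univ).inter
    (isClosed_iInter fun A => isClosed_iInter fun B => hlattice A B))

open scoped Classical in
theorem latBSet_subset_closure_topSet : LatBSet X ⊆ closure (TopSet X) := by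
  intro F hF
  refine mem_closure_pi_of_forall_finset fun I => ?_
  let t := generateFrom {A | A ∈ I ∧ F A = true}
  refine ⟨fun A => decide (IsOpen[t] A), ⟨t, fun A => decide_eq_true_iff⟩, fun A hA => ?_⟩
  have hopen : IsOpen[t] A ↔ F A = true :=
    ⟨(isSublattice_of_mem_latBSet hF).mem_of_isOpen_generateFrom hF.1 hF.2.1
        (I.finite_toSet.subset fun _ hB => hB.1) (fun _ hB => hB.2),
      fun hFA => isOpen_generateFrom_of_mem ⟨hA, hFA⟩⟩
  simp only [hopen, Bool.decide_eq_true]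

theorem closure_topSet : closure (TopSet X) = LatBSet X :=
  (closure_minimal topSet_subset_latBSet isClosed_latBSet).antisymm
    latBSet_subset_closure_topSet

open scoped Classical in
variable (X) in
noncomputable def finiteOrUniv : Set X → Bool := fun A => decide (A.Finite ∨ A = univ)

theorem finiteOrUniv_eq_true {A : Set X} : finiteOrUniv X A = true ↔ A.Finite ∨ A = univ := by
  simp only [finiteOrUniv, decide_eq_true_iff]

theorem finiteOrUniv_mem_latBSet : finiteOrUniv X ∈ LatBSet X := by
  refine ⟨finiteOrUniv_eq_true.2 (Or.inl finite_empty), finiteOrUniv_eq_true.2 (Or.inr rfl), ?_⟩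
  simp only [finiteOrUniv_eq_true]
  rintro A B (hA | rfl) (hB | rfl)
  · exact ⟨Or.inl (hA.union hB), Or.inl (hA.inter_of_left B)⟩
  · simp [hA]
  · simp [hB]
  · simp

theorem finiteOrUniv_notMem_topSet [Infinite X] : finiteOrUniv X ∉ TopSet X := by
  rintro ⟨t, ht⟩
  have : DiscreteTopology X := discreteTopology_iff_isOpen_singleton.mpr fun x =>
    (ht {x}).mp (finiteOrUniv_eq_true.mpr (Or.inl (finite_singleton x)))
  obtain ⟨x⟩ : Nonempty X := inferInstance
  rcases finiteOrUniv_eq_true.mp ((ht {x}ᶜ).mpr (isOpen_discrete _)) with hfin | huniv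
  · exact (finite_singleton x).infinite_compl hfin
  · exact compl_ne_univ.mpr (singleton_nonempty x) huniv

end

/-- for an infinite set `X`, the closure of `Top(X)` in
`2^{P(X)}` is exactly `LatB(X)`; in particular `Top(X)` is a proper subset of
`LatB(X)`, and `Top(X)` is neither closed nor compact in `2^{P(X)}`. -/
theorem closure_topSet_eq_latBSet (X : Type*) [Infinite X] :
    closure (TopSet X) = LatBSet X ∧ TopSet X ⊂ LatBSet X ∧
      ¬ IsClosed (TopSet X) ∧ ¬ IsCompact (TopSet X) := by
  have hssubset : TopSet X ⊂ LatBSet X :=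
    ⟨topSet_subset_latBSet, fun h => finiteOrUniv_notMem_topSet (h finiteOrUniv_mem_latBSet)⟩
  have hnotClosed : ¬ IsClosed (TopSet X) := fun h =>
    hssubset.ne (h.closure_eq ▸ closure_topSet)
  exact ⟨closure_topSet, hssubset, hnotClosed, fun h => hnotClosed h.isClosed⟩
end

section
/- Let X be an infinite set. Then Top(X) has empty interior in the subspace LatB(X) of 2^{P(X)}: equivalently, LatB(X) \ Top(X) is dense in LatB(X), i.e. every nonempty relatively open subset of LatB(X) contains a point of LatB(X) that is not in Top(X). -/
/-! A basic neighbourhood of `F` in `LatB(X)` only prescribes `F` on finitely many sets `I`, and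
these cannot separate the points of some infinite set `Y`. Fix `y₀ ∈ Y`. Adjoining to the
members of `F` that do not split `Y` (`IsBlock Y`) all their unions with finite subsets of
`Y \ {y₀}` gives a lattice that still agrees with `F` on `I`, but contains every singleton `{y}`,
`y ∈ Y \ {y₀}`, without containing their union `Y \ {y₀}`; so it is not a topology. -/

open Set

section

variable {X : Type*}

def IsBlock (Y A : Set X) : Prop := Y ⊆ A ∨ Disjoint A Y

namespace IsBlock

variable {Y A B : Set X}

lemma empty (Y : Set X) : IsBlock Y ∅ := Or.inr (empty_disjoint Y)

lemma univ (Y : Set X) : IsBlock Y univ := Or.inl (subset_univ Y)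

lemma union (hA : IsBlock Y A) (hB : IsBlock Y B) : IsBlock Y (A ∪ B) := by
  rcases hA with hYA | hAY
  · exact Or.inl (hYA.trans subset_union_left)
  rcases hB with hYB | hBY
  · exact Or.inl (hYB.trans subset_union_right)
  exact Or.inr (disjoint_union_left.2 ⟨hAY, hBY⟩)

lemma inter (hA : IsBlock Y A) (hB : IsBlock Y B) : IsBlock Y (A ∩ B) := by
  rcases hA with hYA | hAY
  · rcases hB with hYB | hBY
    · exact Or.inl (subset_inter hYA hYB)
    · exact Or.inr (hBY.mono_left inter_subset_right)
  · exact Or.inr (hAY.mono_left inter_subset_left)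

end IsBlock

/-- An atom of the finite Boolean algebra generated by `I`, chosen infinite. -/
lemma exists_infinite_isBlock [Infinite X] {I : Set (Set X)} (hI : I.Finite) :
    ∃ Y : Set X, Y.Infinite ∧ ∀ A ∈ I, IsBlock Y A := by
  have := hI.to_subtype
  obtain ⟨v, hv⟩ := Finite.exists_infinite_fiber fun (x : X) (A : I) => x ∈ (A : Set X)
  refine ⟨_, infinite_coe_iff.mp hv, fun A hA => ?_⟩
  have hfiber : ∀ x, x ∈ (fun (x : X) (A : I) => x ∈ (A : Set X)) ⁻¹' {v} →
      (x ∈ A ↔ v ⟨A, hA⟩) := fun x hx => Iff.of_eq (congrFun hx ⟨A, hA⟩)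
  by_cases hvA : v ⟨A, hA⟩
  · exact Or.inl fun x hx => (hfiber x hx).2 hvA
  · exact Or.inr (disjoint_right.2 fun x hx hxA => hvA ((hfiber x hx).1 hxA))

lemma TopSet.iUnion {G : Set X → Bool} (hG : G ∈ TopSet X) {ι : Type*} {s : ι → Set X}
    (hs : ∀ i, G (s i) = true) : G (⋃ i, s i) = true := by
  obtain ⟨t, ht⟩ := hG
  exact (ht _).2 (@isOpen_iUnion X ι t s fun i => (ht _).1 (hs i))

section AdjoinFinite

variable {F : Set X → Bool} {Y : Set X} {y₀ : X}

open Classical in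
noncomputable def adjoinFinite (F : Set X → Bool) (Y : Set X) (y₀ : X) : Set X → Bool :=
  fun A => decide (∃ B K, F B = true ∧ IsBlock Y B ∧ K.Finite ∧ K ⊆ Y \ {y₀} ∧ A = B ∪ K)

lemma adjoinFinite_eq_true {A : Set X} :
    adjoinFinite F Y y₀ A = true ↔
      ∃ B K, F B = true ∧ IsBlock Y B ∧ K.Finite ∧ K ⊆ Y \ {y₀} ∧ A = B ∪ K := by
  simp [adjoinFinite]

lemma adjoinFinite_mem_latBSet (hF : F ∈ LatBSet X) : adjoinFinite F Y y₀ ∈ LatBSet X := by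
  obtain ⟨hF_empty, hF_univ, hF_lat⟩ := hF
  refine ⟨adjoinFinite_eq_true.2 ⟨∅, ∅, hF_empty, .empty Y, finite_empty, empty_subset _, by simp⟩,
    adjoinFinite_eq_true.2 ⟨univ, ∅, hF_univ, .univ Y, finite_empty, empty_subset _, by simp⟩,
    fun A₁ A₂ hA₁ hA₂ => ?_⟩
  obtain ⟨B₁, K₁, hFB₁, hB₁, hK₁, hKY₁, rfl⟩ := adjoinFinite_eq_true.1 hA₁
  obtain ⟨B₂, K₂, hFB₂, hB₂, hK₂, hKY₂, rfl⟩ := adjoinFinite_eq_true.1 hA₂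
  obtain ⟨hF_union, hF_inter⟩ := hF_lat B₁ B₂ hFB₁ hFB₂
  refine ⟨adjoinFinite_eq_true.2 ⟨B₁ ∪ B₂, K₁ ∪ K₂, hF_union, hB₁.union hB₂, hK₁.union hK₂,
    union_subset hKY₁ hKY₂, union_union_union_comm _ _ _ _⟩, ?_⟩
  refine adjoinFinite_eq_true.2 ⟨B₁ ∩ B₂, K₁ ∩ (B₂ ∪ K₂) ∪ B₁ ∩ K₂, hF_inter, hB₁.inter hB₂,
    (hK₁.inter_of_left _).union (hK₂.inter_of_right _),
    union_subset (inter_subset_left.trans hKY₁) (inter_subset_right.trans hKY₂), ?_⟩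
  ext x
  simp only [mem_inter_iff, mem_union]
  tauto

lemma adjoinFinite_eq_of_isBlock (hy₀ : y₀ ∈ Y) {A : Set X} (hA : IsBlock Y A) :
    adjoinFinite F Y y₀ A = F A := by
  refine Bool.eq_iff_iff.2 ⟨fun hGA => ?_, fun hFA => ?_⟩
  · obtain ⟨B, K, hFB, hB, -, hKY, rfl⟩ := adjoinFinite_eq_true.1 hGA
    suffices K ⊆ B by rwa [union_eq_left.2 this]
    rcases hA with hYA | hAY
    · have hy₀B : y₀ ∈ B := (hYA hy₀).resolve_right fun h => (hKY h).2 rfl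
      rcases hB with hYB | hBY
      · exact hKY.trans (sdiff_subset.trans hYB)
      · exact absurd hy₀ (disjoint_left.1 hBY hy₀B)
    · exact fun x hx => absurd (hKY hx).1 (disjoint_left.1 hAY (Or.inr hx))
  · exact adjoinFinite_eq_true.2 ⟨A, ∅, hFA, hA, finite_empty, empty_subset _, by simp⟩

lemma adjoinFinite_notMem_topSet (hF : F ∅ = true) (hy₀ : y₀ ∈ Y) (hY : Y.Infinite) :
    adjoinFinite F Y y₀ ∉ TopSet X := by
  intro hG
  have hsingleton : ∀ y : ↥(Y \ {y₀}), adjoinFinite F Y y₀ {(y : X)} = true := fun y =>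
    adjoinFinite_eq_true.2 ⟨∅, {(y : X)}, hF, .empty Y, finite_singleton _,
      singleton_subset_iff.2 y.2, (empty_union _).symm⟩
  have hD := TopSet.iUnion hG hsingleton
  rw [iUnion_of_singleton_coe] at hD
  obtain ⟨B, K, -, hB, hK, -, hD⟩ := adjoinFinite_eq_true.1 hD
  rcases hB with hYB | hBY
  · have hy₀D : y₀ ∈ Y \ {y₀} := hD ▸ Or.inl (hYB hy₀)
    exact hy₀D.2 rfl
  · refine (hY.sdiff (finite_singleton y₀)) (hK.subset fun x hx => ?_)
    have hxBK : x ∈ B ∪ K := hD ▸ hx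
    exact hxBK.resolve_left fun hxB => disjoint_left.1 hBY hxB hx.1

end AdjoinFinite

lemma exists_mem_latBSet_eqOn_notMem_topSet [Infinite X] {F : Set X → Bool} (hF : F ∈ LatBSet X)
    {I : Set (Set X)} (hI : I.Finite) : ∃ G ∈ LatBSet X, EqOn G F I ∧ G ∉ TopSet X := by
  obtain ⟨Y, hY, hIY⟩ := exists_infinite_isBlock hI
  obtain ⟨y₀, hy₀⟩ := hY.nonempty
  exact ⟨adjoinFinite F Y y₀, adjoinFinite_mem_latBSet hF,
    fun A hA => adjoinFinite_eq_of_isBlock hy₀ (hIY A hA), adjoinFinite_notMem_topSet hF.1 hy₀ hY⟩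

end

/-- for an infinite set `X`, `Top(X)` has empty interior in the
subspace `LatB(X)` of `2^{P(X)}`. -/
theorem topSet_interior_empty_in_latBSet (X : Type*) [Infinite X] :
    interior {ρ : ↥(LatBSet X) | ρ.val ∈ TopSet X} = ∅ := by
  refine eq_empty_iff_forall_notMem.2 fun ⟨F, hF⟩ hρ => ?_
  rw [mem_interior_iff_mem_nhds, nhds_induced, Filter.mem_comap] at hρ
  obtain ⟨V, hV, hVsub⟩ := hρ
  rw [nhds_pi, Filter.mem_pi] at hV
  obtain ⟨I, hI, t, ht, hIt⟩ := hV
  obtain ⟨G, hG, hGF, hGtop⟩ := exists_mem_latBSet_eqOn_notMem_topSet hF hI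
  refine hGtop (hVsub (a := ⟨G, hG⟩) (hIt fun A hA => ?_))
  show G A ∈ t A
  rw [hGF hA]
  exact Filter.mem_pure.1 (nhds_discrete Bool ▸ ht A)
end

section
/- Let X be an infinite set. Then Top(X), equipped with the subspace topology induced from the product space 2^{P(X)}, is not a locally compact space. -/
/-!
A basic neighbourhood of the discrete topology in `2^{P(X)}` only asks finitely many sets `I` to
be open. Let `φ` send a point to the members of `I` containing it; as `X` is infinite, some fibre
of `φ` is infinite. For finite `S ⊆ X`, the sets containing the `φ`-fibre of each of their points
outside `S` form a topology in which `I` is open. As `S` grows these topologies converge to the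
family of sets containing the fibres of all but finitely many of their points. That family has
all singletons open but is not discrete (remove one point from an infinite fibre), so it is not a
topology; yet it lies in every compact neighbourhood of the discrete topology, because such a
neighbourhood is closed in the Hausdorff space `2^{P(X)}`.
-/

open Set Filter Topology

open scoped Classical

section FiberTopology

variable {X Y : Type*}

def fiberDefect (φ : X → Y) (B : Set X) : Set X := {x ∈ B | ∃ y, φ y = φ x ∧ y ∉ B}

theorem fiberDefect_inter_subset (φ : X → Y) (B C : Set X) :
    fiberDefect φ (B ∩ C) ⊆ fiberDefect φ B ∪ fiberDefect φ C := by
  rintro x ⟨⟨hxB, hxC⟩, y, hyx, hy⟩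
  by_cases hyB : y ∈ B
  · exact Or.inr ⟨hxC, y, hyx, fun hyC => hy ⟨hyB, hyC⟩⟩
  · exact Or.inl ⟨hxB, y, hyx, hyB⟩

theorem fiberDefect_sUnion_subset (φ : X → Y) (𝒮 : Set (Set X)) :
    fiberDefect φ (⋃₀ 𝒮) ⊆ ⋃ B ∈ 𝒮, fiberDefect φ B := by
  rintro x ⟨⟨B, hB, hxB⟩, y, hyx, hy⟩
  exact mem_biUnion hB ⟨hxB, y, hyx, fun hyB => hy ⟨B, hB, hyB⟩⟩

theorem fiberDefect_eq_empty {φ : X → Y} {B : Set X}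
    (hB : ∀ x y, φ y = φ x → x ∈ B → y ∈ B) : fiberDefect φ B = ∅ :=
  eq_empty_of_forall_notMem fun x ⟨hx, y, hyx, hy⟩ => hy (hB x y hyx hx)

@[reducible] def fiberTopology (φ : X → Y) (S : Set X) : TopologicalSpace X where
  IsOpen B := fiberDefect φ B ⊆ S
  isOpen_univ := by simp [fiberDefect]
  isOpen_inter B C hB hC := (fiberDefect_inter_subset φ B C).trans (union_subset hB hC)
  isOpen_sUnion 𝒮 h𝒮 := (fiberDefect_sUnion_subset φ 𝒮).trans (iUnion₂_subset h𝒮)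

theorem isOpen_fiberTopology {φ : X → Y} {S B : Set X} :
    IsOpen[fiberTopology φ S] B ↔ fiberDefect φ B ⊆ S := Iff.rfl

theorem decide_isOpen_mem_topSet (t : TopologicalSpace X) :
    (fun A => decide (IsOpen[t] A)) ∈ TopSet X :=
  ⟨t, fun _ => decide_eq_true_iff⟩

theorem tendsto_fiberTopology (φ : X → Y) :
    Tendsto (fun S : Finset X => fun A => decide (IsOpen[fiberTopology φ S] A)) atTop
      (𝓝 fun A => decide (fiberDefect φ A).Finite) := by
  refine tendsto_pi_nhds.2 fun A => ?_
  rw [nhds_discrete, tendsto_pure]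
  by_cases hA : (fiberDefect φ A).Finite
  · filter_upwards [eventually_ge_atTop hA.toFinset] with S hS
    simpa [isOpen_fiberTopology, hA] using Finset.coe_subset.2 hS
  · refine Eventually.of_forall fun S => ?_
    simpa [isOpen_fiberTopology, hA] using fun h => hA (S.finite_toSet.subset h)

theorem finite_fiberDefect_notMem_topSet (φ : X → Y) {y : Y} (hy : (φ ⁻¹' {y}).Infinite) :
    (fun A => decide (fiberDefect φ A).Finite) ∉ TopSet X := by
  rintro ⟨t, ht⟩
  simp only [decide_eq_true_iff] at ht
  have hdiscrete (B : Set X) : IsOpen[t] B := by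
    rw [← biUnion_of_singleton B]
    exact isOpen_biUnion fun x _ => (ht {x}).1 ((finite_singleton x).subset (sep_subset _ _))
  obtain ⟨p, hp⟩ := hy.nonempty
  have hdefect : fiberDefect φ (φ ⁻¹' {y} \ {p}) = φ ⁻¹' {y} \ {p} :=
    sep_eq_self_iff_mem_true.2 fun x hx => ⟨p, hp.trans hx.1.symm, fun h => h.2 rfl⟩
  exact (hy.sdiff (finite_singleton p)) (hdefect ▸ (ht _).2 (hdiscrete _))

end FiberTopology

theorem exists_finset_of_mem_nhds_pi_discrete {ι : Type*} {Z : ι → Type*}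
    [∀ i, TopologicalSpace (Z i)] [∀ i, DiscreteTopology (Z i)] {g : ∀ i, Z i}
    {W : Set (∀ i, Z i)} (hW : W ∈ 𝓝 g) :
    ∃ I : Finset ι, ∀ F : ∀ i, Z i, (∀ i ∈ I, F i = g i) → F ∈ W := by
  rw [nhds_pi, mem_pi'] at hW
  obtain ⟨I, u, hu, hIu⟩ := hW
  refine ⟨I, fun F hF => hIu fun i hi => ?_⟩
  rw [hF i hi]
  exact mem_pure.1 (by simpa [nhds_discrete] using hu i)

/-- for an infinite set `X`, the subspace `Top(X)` of `2^{P(X)}`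
is not locally compact. -/
theorem topSet_not_locallyCompact (X : Type*) [Infinite X] :
    ¬ LocallyCompactSpace ↥(TopSet X) := by
  intro hX
  let discrete : TopSet X := ⟨_, decide_isOpen_mem_topSet ⊥⟩
  obtain ⟨K, hK, hKnhds⟩ := exists_compact_mem_nhds discrete
  obtain ⟨W, hW, hWK⟩ := (mem_nhds_subtype _ discrete K).1 hKnhds
  obtain ⟨I, hIW⟩ := exists_finset_of_mem_nhds_pi_discrete hW
  let φ : X → I → Prop := fun x A => x ∈ (A : Set X)
  obtain ⟨y, hy⟩ := Finite.exists_infinite_fiber φ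
  have hsaturated (A : Set X) (hA : A ∈ I) : fiberDefect φ A = ∅ :=
    fiberDefect_eq_empty fun x z hzx hx => (congrFun hzx ⟨A, hA⟩).mpr hx
  have hmemK (S : Finset X) :
      (fun A => decide (IsOpen[fiberTopology φ S] A)) ∈ Subtype.val '' K :=
    ⟨⟨_, decide_isOpen_mem_topSet _⟩, hWK <| hIW _ fun A hA =>
      decide_eq_decide.2 (iff_of_true ((hsaturated A hA).subset.trans (empty_subset _)) trivial),
      rfl⟩
  have hlim : (fun A => decide (fiberDefect φ A).Finite) ∈ Subtype.val '' K :=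
    (hK.image continuous_subtype_val).isClosed.mem_of_tendsto (tendsto_fiberTopology φ)
      (Eventually.of_forall hmemK)
  obtain ⟨F, -, hF⟩ := hlim
  exact finite_fiberDefect_notMem_topSet φ (infinite_coe_iff.1 hy) (hF ▸ F.2)
end
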